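/- arXiv:2003.09101 — 5 statements merged into one kernel-verified Lean document; each statement's English description precedes it below -/
import Mathlib

section
/- Let k be a field and d a positive integer. For every ideal I of the polynomial ring k[X_1,…,X_d] there exist d+1 elements f_1,…,f_{d+1} ∈ I such that the radical of the ideal generated by f_1,…,f_{d+1} equals the radical of I. -/
/-!
Choose `f₁, f₂, …` in `I` one at a time, taking `fᵣ₊₁` outside every minimal prime of
`(f₁, …, fᵣ)` that does not contain `I` (prime avoidance; a Noetherian ideal has finitely many
minimal primes). A minimal prime of `(f₁, …, fᵣ₊₁)` not containing `I` then strictly contains such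
a minimal prime of `(f₁, …, fᵣ)`, so by induction it has height at least `r + 1`. In a ring of
Krull dimension `n` no prime has height `n + 1`, so every minimal prime of `(f₁, …, fₙ₊₁)` contains
`I`, i.e. both ideals have the same radical. Finally `dim k[X₁, …, X_d] = d`.
-/

lemma Ideal.exists_mem_forall_notMem_of_finite {R : Type*} [CommRing R] {I : Ideal R}
    {S : Set (Ideal R)} (hS : S.Finite) (hprime : ∀ P ∈ S, P.IsPrime) (hI : ∀ P ∈ S, ¬I ≤ P) :
    ∃ g ∈ I, ∀ P ∈ S, g ∉ P := by
  by_contra! hcover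
  obtain ⟨P, hPS, hIP⟩ := (Ideal.subset_union_prime_finite hS (f := id) ⊥ ⊥
    fun P hP _ _ ↦ hprime P hP).mp fun g hg ↦
      let ⟨P, hPS, hgP⟩ := hcover g hg; Set.mem_biUnion hPS hgP
  exact hI P hPS hIP

section

variable {R : Type*} [CommRing R] [IsNoetherianRing R]

theorem Ideal.exists_mem_forall_minimalPrimes_le_height (I : Ideal R) (r : ℕ) :
    ∃ f : Fin r → R, (∀ i, f i ∈ I) ∧
      ∀ Q ∈ (Ideal.span (Set.range f)).minimalPrimes, ¬I ≤ Q → r ≤ Q.height := by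
  induction r with
  | zero => exact ⟨Fin.elim0, fun i ↦ i.elim0, fun _ _ _ ↦ by simp⟩
  | succ r ih =>
    obtain ⟨f, hfI, hf⟩ := ih
    set J := Ideal.span (Set.range f)
    obtain ⟨g, hgI, hg⟩ := Ideal.exists_mem_forall_notMem_of_finite
      ((J.finite_minimalPrimes_of_isNoetherianRing R).sep fun P ↦ ¬I ≤ P)
      (fun P hP ↦ hP.1.isPrime) fun P hP ↦ hP.2
    refine ⟨Fin.cons g f, Fin.cases hgI hfI, fun Q hQ hIQ ↦ ?_⟩
    have := hQ.isPrime
    rw [Fin.range_cons, Ideal.span_insert] at hQ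
    obtain ⟨P, hP, hPQ⟩ := Ideal.exists_minimalPrimes_le (le_sup_right.trans hQ.1.2)
    have := hP.isPrime
    have hIP : ¬I ≤ P := fun h ↦ hIQ (h.trans hPQ)
    have hgQ : g ∈ Q := hQ.1.2 (Ideal.mem_sup_left (Ideal.mem_span_singleton_self g))
    have hPQ : P < Q := lt_of_le_of_ne hPQ fun h ↦ hg P ⟨hP, hIP⟩ (h ▸ hgQ)
    calc ((r + 1 : ℕ) : ℕ∞) = r + 1 := by push_cast; rfl
      _ ≤ P.height + 1 := by gcongr; exact hf P hP hIP
      _ ≤ Q.height := Ideal.height_add_one_le_of_lt_of_isPrime hPQ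

theorem Ideal.exists_radical_span_eq_of_ringKrullDim_le {n : ℕ} (hdim : ringKrullDim R ≤ n)
    (I : Ideal R) :
    ∃ f : Fin (n + 1) → R, (∀ i, f i ∈ I) ∧ (Ideal.span (Set.range f)).radical = I.radical := by
  obtain ⟨f, hfI, hf⟩ := I.exists_mem_forall_minimalPrimes_le_height (n + 1)
  refine ⟨f, hfI, le_antisymm (Ideal.radical_mono (Ideal.span_le.mpr ?_)) ?_⟩
  · rintro _ ⟨i, rfl⟩
    exact hfI i
  rw [Ideal.radical_le_radical_iff, ← Ideal.sInf_minimalPrimes]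
  refine le_sInf fun P hP ↦ not_not.mp fun hIP ↦ ?_
  have := hP.isPrime
  have : n + 1 ≤ n := by
    exact_mod_cast (WithBot.coe_le_coe.mpr (hf P hP hIP)).trans
      (P.height_le_ringKrullDim_of_isPrime.trans hdim)
  omega

end

theorem kronecker_set_theoretic_general (k : Type*) [Field k] (d : ℕ)
    (I : Ideal (MvPolynomial (Fin d) k)) :
    ∃ f : Fin (d + 1) → MvPolynomial (Fin d) k,
      (∀ i, f i ∈ I) ∧ (Ideal.span (Set.range f)).radical = I.radical :=
  I.exists_radical_span_eq_of_ringKrullDim_le <| by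
    simp only [MvPolynomial.ringKrullDim_of_isNoetherianRing, ringKrullDim_eq_zero_of_field,
      Nat.card_eq_fintype_card, Fintype.card_fin, zero_add, le_refl]

/-- **Kronecker's theorem (1882).** Every ideal of a polynomial ring in `d` variables
over a field is defined set-theoretically by `d + 1` elements. -/
theorem kronecker_set_theoretic (k : Type*) [Field k] (d : ℕ) (hd : 0 < d)
    (I : Ideal (MvPolynomial (Fin d) k)) :
    ∃ f : Fin (d + 1) → MvPolynomial (Fin d) k,
      (∀ i, f i ∈ I) ∧ (Ideal.span (Set.range f)).radical = I.radical :=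
  kronecker_set_theoretic_general k d I
end

section
/- Let k be a field and let a_1, a_2, a_3 be positive integers with gcd(a_1,a_2,a_3) = 1, and let p(a) ⊆ k[X_1,X_2,X_3] be the kernel of the k-algebra homomorphism sending X_i to T^{a_i}. Then exactly one of the following holds: (a) p(a) is generated by two elements (a complete intersection), or (b) there exist positive integers α_1, α_2, β_1, β_2, γ_1, γ_2 such that p(a) is generated by the three 2×2 minors of the matrix with rows (X_1^{α_1}, X_2^{β_1}, X_3^{γ_1}) and (X_2^{β_2}, X_3^{γ_2}, X_1^{α_2}), namely X_1^{α_1}X_3^{γ_2} − X_2^{β_1+β_2}, X_1^{α_1}X_1^{α_2} − X_2^{β_2}X_3^{γ_1}, and X_2^{β_1}X_1^{α_2} − X_3^{γ_1+γ_2}. -/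
open MvPolynomial

/-- The prime ideal defining the monomial curve `C(a)`: the kernel of the `k`-algebra
map `k[X_1, …, X_d] → k[T]`, `X_i ↦ T^{a i}`. -/
noncomputable def monomialCurveIdeal (k : Type*) [Field k] {d : ℕ} (a : Fin d → ℕ) :
    Ideal (MvPolynomial (Fin d) k) :=
  RingHom.ker (MvPolynomial.aeval (R := k) fun i => (Polynomial.X : Polynomial k) ^ a i)

/-!
Let `cᵢ` be the least positive integer such that `cᵢ aᵢ` lies in the semigroup generated by
the other two weights. The curve ideal is spanned by the binomials `X^u - X^v` with
`weight u = weight v`, and such a binomial whose monomials share a variable is that variable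
times a binomial of smaller weight. An induction on the weight then shows that the ideal is
generated by one binomial `Xᵢ^cᵢ - X^wᵢ` for each `i`, where `X^wᵢ` avoids `Xᵢ`.

If `cᵢ aᵢ = cⱼ aⱼ` for some `i ≠ j`, the binomials for `i` and `j` agree up to sign and
two generators suffice. Otherwise a descent on `cᵢ aᵢ` shows that in every relation
`cᵢ aᵢ = rᵢⱼ aⱼ + rᵢₗ aₗ` both coefficients are positive; minimality then gives
`cⱼ ≤ rᵢⱼ + rₗⱼ`, and adding up the three relations forces equality, which says exactly that
the three binomials are the `2 × 2` minors of Herzog's matrix. These minors cannot be replaced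
by two generators: no syzygy among them has a unit coefficient, as one sees by sending one
variable to `T` and the other two to `0`.
-/

open Finsupp (single weight)

section Binomials

variable {σ R : Type*} [CommRing R]

def BinomialMem (J : Ideal (MvPolynomial σ R)) (u v : σ →₀ ℕ) : Prop :=
  monomial u (1 : R) - monomial v 1 ∈ J

theorem binomialMem_iff {J : Ideal (MvPolynomial σ R)} {u v : σ →₀ ℕ} :
    BinomialMem J u v ↔ monomial u (1 : R) - monomial v 1 ∈ J :=
  Iff.rfl

namespace BinomialMem

variable {J : Ideal (MvPolynomial σ R)} {u v w : σ →₀ ℕ}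

theorem refl (u : σ →₀ ℕ) : BinomialMem J u u := by
  simp [BinomialMem]

theorem symm (h : BinomialMem J u v) : BinomialMem J v u := by
  simpa [BinomialMem] using J.neg_mem h

theorem trans (h : BinomialMem J u v) (h' : BinomialMem J v w) : BinomialMem J u w := by
  simpa [BinomialMem] using J.add_mem h h'

theorem add_left (w : σ →₀ ℕ) (h : BinomialMem J u v) : BinomialMem J (w + u) (w + v) := by
  have := J.mul_mem_left (monomial w 1) h
  rwa [mul_sub, monomial_mul, monomial_mul, one_mul] at this

end BinomialMem

def BinomialsBelow (J : Ideal (MvPolynomial σ R)) (a : σ → ℕ) (n : ℕ) : Prop :=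
  ∀ u v, weight a u = weight a v → weight a u < n → BinomialMem J u v

theorem BinomialsBelow.binomialMem {J : Ideal (MvPolynomial σ R)} {a : σ → ℕ} {n : ℕ}
    (IH : BinomialsBelow J a n) {u v : σ →₀ ℕ} {j : σ} (haj : 0 < a j) (hu : u j ≠ 0)
    (hv : v j ≠ 0) (hwu : weight a u = n) (hwv : weight a v = n) : BinomialMem J u v := by
  have split : ∀ w : σ →₀ ℕ, w j ≠ 0 → single j 1 + (w - single j 1) = w ∧
      weight a w = a j + weight a (w - single j 1) := by
    intro w hw
    have hw' := add_tsub_cancel_of_le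
      (Finsupp.single_le_iff.mpr (Nat.one_le_iff_ne_zero.mpr hw))
    refine ⟨hw', ?_⟩
    conv_lhs => rw [← hw']
    simp [Finsupp.weight_single]
  obtain ⟨hu', hwu'⟩ := split u hu
  obtain ⟨hv', hwv'⟩ := split v hv
  rw [← hu', ← hv']
  exact (IH _ _ (by omega) (by omega)).add_left _

theorem monomial_single_add_single (i j : σ) (x y : ℕ) :
    monomial (single i x + single j y) (1 : R) = X i ^ x * X j ^ y := by
  rw [monomial_single_add, ← X_pow_eq_monomial]

end Binomials

section Kernel

variable {σ k : Type*} [Field k]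

theorem aeval_X_pow_monomial (a : σ → ℕ) (u : σ →₀ ℕ) (c : k) :
    aeval (fun i => (Polynomial.X : Polynomial k) ^ a i) (monomial u c) =
      Polynomial.monomial (weight a u) c := by
  rw [aeval_monomial, ← Polynomial.C_mul_X_pow_eq_monomial, Finsupp.weight_apply,
    Polynomial.algebraMap_eq]
  simp only [Finsupp.prod, Finsupp.sum, ← pow_mul, Finset.prod_pow_eq_pow_sum, smul_eq_mul,
    mul_comm]

variable {d : ℕ} {a : Fin d → ℕ}

theorem binomialMem_monomialCurveIdeal {u v : Fin d →₀ ℕ} (h : weight a u = weight a v) :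
    BinomialMem (monomialCurveIdeal k a) u v := by
  simp [BinomialMem, monomialCurveIdeal, aeval_X_pow_monomial, h]

theorem monomialCurveIdeal_le {J : Ideal (MvPolynomial (Fin d) k)}
    (hJ : ∀ u v, weight a u = weight a v → BinomialMem J u v) : monomialCurveIdeal k a ≤ J := by
  -- `s` sends `T ^ n` to a monomial of weight `n`, so `f - s (aeval _ f)` is a combination of
  -- binomials `X^u - X^v` with `weight u = weight v`, and `s (aeval _ f) = 0` on the kernel.
  let ν := Function.invFun fun u : Fin d →₀ ℕ => weight a u
  let s : Polynomial k →ₗ[k] MvPolynomial (Fin d) k := Polynomial.lsum fun n => monomial (ν n)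
  have hs : ∀ f, f - s (aeval (fun i => (Polynomial.X : Polynomial k) ^ a i) f) ∈ J := by
    intro f
    induction f using MvPolynomial.induction_on' with
    | monomial u c =>
      have hν : weight a u = weight a (ν (weight a u)) := (Function.invFun_eq ⟨u, rfl⟩).symm
      have := J.mul_mem_left (C c) (hJ _ _ hν)
      rw [mul_sub, C_mul_monomial, C_mul_monomial, mul_one] at this
      simpa [s, aeval_X_pow_monomial] using this
    | add f g hf hg => simpa [add_sub_add_comm] using J.add_mem hf hg
  intro f hf
  simpa [RingHom.mem_ker.mp hf] using hs f

end Kernel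

section MinMultiple

variable {σ : Type*}

/-- Herzog's `cᵢ`. It is `0` (the value of `sInf ∅`) when no other weight is positive. -/
noncomputable def minMultiple (a : σ → ℕ) (i : σ) : ℕ :=
  sInf {c | 0 < c ∧ ∃ v : σ →₀ ℕ, v i = 0 ∧ weight a v = c * a i}

variable {a : σ → ℕ} {i : σ}

theorem minMultiple_spec {j : σ} (hji : j ≠ i) (haj : 0 < a j) :
    0 < minMultiple a i ∧ ∃ v : σ →₀ ℕ, v i = 0 ∧ weight a v = minMultiple a i * a i := by
  have hne : {c | 0 < c ∧ ∃ v : σ →₀ ℕ, v i = 0 ∧ weight a v = c * a i}.Nonempty :=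
    ⟨a j, haj, single j (a i), by simp [hji], by simp [Finsupp.weight_single, mul_comm]⟩
  exact Nat.sInf_mem hne

theorem minMultiple_le {s : ℕ} {v : σ →₀ ℕ} (hs : 0 < s) (hv : v i = 0)
    (h : weight a v = s * a i) : minMultiple a i ≤ s :=
  Nat.sInf_le ⟨hs, v, hv, h⟩

end MinMultiple

section Generation

variable {σ R : Type*} [CommRing R] {a : σ → ℕ}

theorem eq_zero_of_weight_eq_zero (ha : ∀ i, 0 < a i) {u : σ →₀ ℕ} (h : weight a u = 0) :
    u = 0 := by
  ext m
  by_contra hm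
  have := Finsupp.le_weight_of_ne_zero' a hm
  have := ha m
  simp_all

theorem exists_ne_zero_of_weight_pos {u : σ →₀ ℕ} (h : 0 < weight a u) : ∃ i, u i ≠ 0 := by
  by_contra! h0
  simp [show u = 0 from Finsupp.ext h0] at h

def HasMinimalBinomials (J : Ideal (MvPolynomial σ R)) (a : σ → ℕ) : Prop :=
  ∀ i, ∃ w : σ →₀ ℕ, w i = 0 ∧ weight a w = minMultiple a i * a i ∧
    BinomialMem J (single i (minMultiple a i)) w

theorem HasMinimalBinomials.exists_binomialMem_single {J : Ideal (MvPolynomial σ R)}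
    (hJ : HasMinimalBinomials J a) (ha : ∀ i, 0 < a i) {i j : σ} (hji : j ≠ i) {s : ℕ}
    (hs : minMultiple a i ≤ s) :
    ∃ w : σ →₀ ℕ, w i = 0 ∧ w ≠ 0 ∧ weight a (single i (s - minMultiple a i) + w) = s * a i ∧
      BinomialMem J (single i s) (single i (s - minMultiple a i) + w) := by
  obtain ⟨w, hwi, hww, hJw⟩ := hJ i
  refine ⟨w, hwi, ?_, ?_, ?_⟩
  · rintro rfl
    rw [map_zero] at hww
    exact (Nat.mul_pos (minMultiple_spec hji (ha j)).1 (ha i)).ne' hww.symm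
  · rw [map_add, hww, Finsupp.weight_single, smul_eq_mul, ← add_mul, Nat.sub_add_cancel hs]
  · rw [show single i s = single i (s - minMultiple a i) + single i (minMultiple a i) by
      rw [← Finsupp.single_add, Nat.sub_add_cancel hs]]
    exact hJw.add_left _

theorem exists_eq_single_of_disjoint {u v : Fin 3 →₀ ℕ} (hu : u ≠ 0) (hv : v ≠ 0)
    (h : Disjoint u.support v.support) :
    ∃ i, (u = single i (u i) ∧ v i = 0) ∨ (v = single i (v i) ∧ u i = 0) := by
  have hcard : u.support.card + v.support.card ≤ 3 := by
    rw [← Finset.card_union_of_disjoint h]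
    exact (Finset.card_le_univ _).trans_eq (Fintype.card_fin 3)
  have hu1 := Finset.card_pos.mpr (Finsupp.support_nonempty_iff.mpr hu)
  have hv1 := Finset.card_pos.mpr (Finsupp.support_nonempty_iff.mpr hv)
  rcases (by omega : u.support.card = 1 ∨ v.support.card = 1) with h1 | h1
  · obtain ⟨i, hi⟩ := Finset.card_eq_one.mp h1
    refine ⟨i, Or.inl ⟨(Finsupp.support_eq_singleton.mp hi).2, ?_⟩⟩
    exact Finsupp.notMem_support_iff.mp (Finset.disjoint_left.mp h (by simp [hi]))
  · obtain ⟨i, hi⟩ := Finset.card_eq_one.mp h1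
    refine ⟨i, Or.inr ⟨(Finsupp.support_eq_singleton.mp hi).2, ?_⟩⟩
    exact Finsupp.notMem_support_iff.mp (Finset.disjoint_right.mp h (by simp [hi]))

variable {a : Fin 3 → ℕ} {J : Ideal (MvPolynomial (Fin 3) R)}

theorem binomialMem_single_single (ha : ∀ i, 0 < a i) (hJ : HasMinimalBinomials J a)
    {i l : Fin 3} (hil : i ≠ l) {s t : ℕ} (hs : 0 < s) (ht : 0 < t) (hst : s * a i = t * a l)
    (IH : BinomialsBelow J a (s * a i)) : BinomialMem J (single i s) (single l t) := by
  have hws : weight a (single i s) = s * a i := by rw [Finsupp.weight_single, smul_eq_mul]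
  have hwt : weight a (single l t) = s * a i := by rw [Finsupp.weight_single, smul_eq_mul, hst]
  obtain ⟨w, hwi, hw0, hu', h1⟩ := hJ.exists_binomialMem_single ha (j := l) hil.symm
    (minMultiple_le hs (by simp [hil.symm]) hwt)
  obtain ⟨w', hw'l, hw'0, hv', h2⟩ := hJ.exists_binomialMem_single ha (j := i) hil
    (minMultiple_le ht (by simp [hil]) (hws.trans hst))
  rw [← hst] at hv'
  -- `w` avoids `i` and `w'` avoids `l`: either one of them meets the other pure power, or both
  -- meet the third variable.
  obtain ⟨j, hj⟩ := Finsupp.support_nonempty_iff.mpr hw0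
  obtain ⟨m, hm⟩ := Finsupp.support_nonempty_iff.mpr hw'0
  rw [Finsupp.mem_support_iff] at hj hm
  have hji : j ≠ i := fun h => hj (h ▸ hwi)
  have hml : m ≠ l := fun h => hm (h ▸ hw'l)
  by_cases hjl : j = l
  · subst hjl
    exact h1.trans (IH.binomialMem (ha j) (by simp [hj]) (by simp [ht.ne']) hu' hwt)
  by_cases hmi : m = i
  · subst hmi
    exact (IH.binomialMem (ha m) (by simp [hs.ne']) (by simp [hm]) hws hv').trans h2.symm
  obtain rfl : j = m := by omega
  exact h1.trans ((IH.binomialMem (ha j) (by simp [hj]) (by simp [hm]) hu' hv').trans h2.symm)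

theorem binomialMem_single_of_weight_eq (ha : ∀ i, 0 < a i) (hJ : HasMinimalBinomials J a)
    {i : Fin 3} {s : ℕ} {v : Fin 3 →₀ ℕ} (hv : v i = 0) (hw : weight a v = s * a i)
    (IH : BinomialsBelow J a (s * a i)) : BinomialMem J (single i s) v := by
  rcases Nat.eq_zero_or_pos s with rfl | hs
  · simpa [eq_zero_of_weight_eq_zero ha (by simpa using hw)] using BinomialMem.refl (J := J) 0
  obtain ⟨w, hwi, hw0, hu', h1⟩ := hJ.exists_binomialMem_single ha (j := i + 1) (by omega)
    (minMultiple_le hs hv hw)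
  by_cases hshare : ∃ j, (single i (s - minMultiple a i) + w) j ≠ 0 ∧ v j ≠ 0
  · obtain ⟨j, hju, hjv⟩ := hshare
    exact h1.trans (IH.binomialMem (ha j) hju hjv hu' hw)
  push Not at hshare
  obtain ⟨l, hl⟩ := exists_ne_zero_of_weight_pos (hw ▸ Nat.mul_pos hs (ha i))
  obtain ⟨j, hj⟩ := Finsupp.support_nonempty_iff.mpr hw0
  rw [Finsupp.mem_support_iff] at hj
  have hju : (single i (s - minMultiple a i) + w) j ≠ 0 := by simp [hj]
  have hli : l ≠ i := fun h => hl (h ▸ hv)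
  have hji : j ≠ i := fun h => hj (h ▸ hwi)
  have hjl : j ≠ l := fun h => hl (h ▸ hshare j hju)
  have hvl : v = single l (v l) := by
    ext m
    rcases (by omega : m = i ∨ m = j ∨ m = l) with rfl | rfl | rfl
    · simp [hv, hli.symm]
    · simp [hshare m hju, hjl]
    · simp
  rw [hvl] at hw ⊢
  rw [Finsupp.weight_single, smul_eq_mul] at hw
  exact binomialMem_single_single ha hJ hli.symm hs (Nat.pos_of_ne_zero hl) hw.symm IH

theorem binomialMem_of_weight_eq (ha : ∀ i, 0 < a i) (hJ : HasMinimalBinomials J a)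
    {u v : Fin 3 →₀ ℕ} (huv : weight a u = weight a v) : BinomialMem J u v := by
  induction hn : weight a u using Nat.strong_induction_on generalizing u v with
  | _ n IH =>
  have IH' : BinomialsBelow J a n := fun x y h h' => IH _ h' h rfl
  by_cases hu : u = 0
  · have hv : v = 0 := eq_zero_of_weight_eq_zero ha (by simp [← huv, hu])
    simpa [hu, hv] using BinomialMem.refl (J := J) 0
  have hv : v ≠ 0 := fun hv => hu (eq_zero_of_weight_eq_zero ha (by simp [huv, hv]))
  by_cases hd : Disjoint u.support v.support
  · obtain ⟨i, ⟨hui, hvi⟩ | ⟨hvi, hui⟩⟩ := exists_eq_single_of_disjoint hu hv hd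
    · have hwu : weight a u = u i * a i := by
        rw [hui, Finsupp.weight_single, smul_eq_mul, ← hui]
      rw [hui]
      exact binomialMem_single_of_weight_eq ha hJ hvi (huv ▸ hwu) (hwu ▸ hn ▸ IH')
    · have hwv : weight a v = v i * a i := by
        rw [hvi, Finsupp.weight_single, smul_eq_mul, ← hvi]
      rw [hvi]
      exact (binomialMem_single_of_weight_eq ha hJ hui (huv ▸ hwv) (hwv ▸ huv ▸ hn ▸ IH')).symm
  · obtain ⟨j, hju, hjv⟩ := Finset.not_disjoint_iff.mp hd
    exact IH'.binomialMem (ha j) (by simpa using hju) (by simpa using hjv) hn (huv ▸ hn)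

end Generation

section Numerical

def multiplesIn (p q r : ℕ) : Set ℕ := {c | 0 < c ∧ ∃ x y, c * p = x * q + y * r}

theorem multiplesIn_comm (p q r : ℕ) : multiplesIn p q r = multiplesIn p r q := by
  ext c
  exact ⟨fun ⟨hc, x, y, h⟩ => ⟨hc, y, x, by omega⟩, fun ⟨hc, x, y, h⟩ => ⟨hc, y, x, by omega⟩⟩

variable {p q r cp cq cr : ℕ}

theorem IsLeast.mul_ne_add (hcp : IsLeast (multiplesIn p q r) cp) {z x y : ℕ} (hz : 0 < z)
    (hxy : 0 < x * q + y * r) : cp * p ≠ z * p + (x * q + y * r) := by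
  intro h
  have hzc : z < cp := Nat.lt_of_mul_lt_mul_right (h ▸ Nat.lt_add_of_pos_right hxy)
  have hmem : cp - z ∈ multiplesIn p q r := ⟨by omega, x, y, by rw [Nat.sub_mul]; omega⟩
  have := hcp.2 hmem
  omega

theorem IsLeast.lt_of_mul_eq (hcp : IsLeast (multiplesIn p q r) cp) (hr : 0 < r)
    {x y x' y' : ℕ} (h : cp * p = x * q + y * r) (hy : 0 < y) (h' : cq * q = x' * p + y' * r)
    (hx' : 0 < x') : x < cq := by
  by_contra! hle
  obtain ⟨e, rfl⟩ := Nat.exists_eq_add_of_le hle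
  refine hcp.mul_ne_add hx' (x := e) (y := y' + y) (by positivity) ?_
  linarith

theorem IsLeast.le_add_of_mul_eq (hp : IsLeast (multiplesIn p q r) cp)
    (hq : IsLeast (multiplesIn q r p) cq) (hr : IsLeast (multiplesIn r p q) cr) (hp0 : 0 < p)
    {xq yq xr yr : ℕ} (hq' : cq * q = xq * r + yq * p) (hr' : cr * r = xr * p + yr * q)
    (hxq : 0 < xq) (hyq : 0 < yq) (hxr : 0 < xr) (hyr : 0 < yr) : cp ≤ yq + xr := by
  have h1 : yr < cq := (multiplesIn_comm r p q ▸ hr).lt_of_mul_eq hp0 (by rw [hr']; ring) hxr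
    hq' hxq
  have h2 : xq < cr := hq.lt_of_mul_eq hp0 hq' hyq (by rw [hr']; ring) hyr
  refine hp.2 ⟨by omega, cq - yr, cr - xq, ?_⟩
  have := Nat.mul_le_mul_right q h1.le
  have := Nat.mul_le_mul_right r h2.le
  rw [Nat.sub_mul, Nat.sub_mul, add_mul]
  omega

theorem IsLeast.eq_add_of_mul_eq (hp : IsLeast (multiplesIn p q r) cp)
    (hq : IsLeast (multiplesIn q r p) cq) (hr : IsLeast (multiplesIn r p q) cr) (hp0 : 0 < p)
    (hq0 : 0 < q) (hr0 : 0 < r) {xp yp xq yq xr yr : ℕ} (hp' : cp * p = xp * q + yp * r)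
    (hq' : cq * q = xq * r + yq * p) (hr' : cr * r = xr * p + yr * q) (hxp : 0 < xp)
    (hyp : 0 < yp) (hxq : 0 < xq) (hyq : 0 < yq) (hxr : 0 < xr) (hyr : 0 < yr) :
    cp = yq + xr ∧ cq = yr + xp ∧ cr = yp + xq := by
  -- Each `c` is at most its claimed value, and summing the three relations shows that the
  -- weighted totals of both sides agree.
  have h1 := Nat.mul_le_mul_right p (hp.le_add_of_mul_eq hq hr hp0 hq' hr' hxq hyq hxr hyr)
  have h2 := Nat.mul_le_mul_right q (hq.le_add_of_mul_eq hr hp hq0 hr' hp' hxr hyr hxp hyp)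
  have h3 := Nat.mul_le_mul_right r (hr.le_add_of_mul_eq hp hq hr0 hp' hq' hxp hyp hxq hyq)
  refine ⟨Nat.eq_of_mul_eq_mul_right hp0 ?_, Nat.eq_of_mul_eq_mul_right hq0 ?_,
    Nat.eq_of_mul_eq_mul_right hr0 ?_⟩ <;> linarith

theorem IsLeast.mul_eq_or_of_mul_eq (hp : IsLeast (multiplesIn p q r) cp)
    (hq : IsLeast (multiplesIn q r p) cq) (hr : IsLeast (multiplesIn r p q) cr) (hp0 : 0 < p)
    (hq0 : 0 < q) (hr0 : 0 < r) {l : ℕ} (h : cp * p = l * q) :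
    cp * p = cq * q ∨ cq * q = cr * r ∨ cr * r = cp * p := by
  obtain ⟨n, hn⟩ : ∃ n, cp * p = n := ⟨_, rfl⟩
  induction n using Nat.strong_induction_on generalizing p q r cp cq cr l with
  | _ n IH =>
  have hl : 0 < l := by
    rcases Nat.eq_zero_or_pos l with rfl | hl
    · rw [zero_mul, mul_eq_zero] at h
      have := hp.1.1
      omega
    · exact hl
  rcases (hq.2 ⟨hl, 0, cp, by linarith⟩ : cq ≤ l).eq_or_lt with rfl | hlt
  · exact Or.inl h
  -- Minimality of `cp` rules out `p` in the relation for `cq`, so `cq * q` is a multiple of `r`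
  -- and smaller than `cp * p`.
  obtain ⟨-, x, y, hxy⟩ := hq.1
  obtain rfl : y = 0 := by
    by_contra hy
    obtain ⟨e, rfl⟩ := Nat.exists_eq_add_of_lt hlt
    refine hp.mul_ne_add (Nat.pos_of_ne_zero hy) (x := e + 1) (y := x) (by positivity) ?_
    linarith
  have hlt' : cq * q < n := hn ▸ h ▸ Nat.mul_lt_mul_of_pos_right hlt hq0
  have := IH _ hlt' hq hr hp hq0 hr0 hp0 (by simpa using hxy) rfl
  omega

theorem IsLeast.pos_of_mul_eq (hp : IsLeast (multiplesIn p q r) cp)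
    (hq : IsLeast (multiplesIn q r p) cq) (hr : IsLeast (multiplesIn r p q) cr) (hp0 : 0 < p)
    (hq0 : 0 < q) (hr0 : 0 < r) (hpq : cp * p ≠ cq * q) (hqr : cq * q ≠ cr * r)
    (hrp : cr * r ≠ cp * p) {x y : ℕ} (h : cp * p = x * q + y * r) : 0 < x ∧ 0 < y := by
  constructor <;> refine Nat.pos_of_ne_zero fun h0 => ?_ <;> subst h0
  · have := (multiplesIn_comm p q r ▸ hp).mul_eq_or_of_mul_eq (multiplesIn_comm r p q ▸ hr)
      (multiplesIn_comm q r p ▸ hq) hp0 hr0 hq0 (l := y) (by simpa using h)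
    omega
  · have := hp.mul_eq_or_of_mul_eq hq hr hp0 hq0 hr0 (l := x) (by simpa using h)
    omega

end Numerical

section Syzygies

theorem card_le_of_span_range_eq {R K : Type*} [CommRing R] [Field K] (φ : R →+* K) {n l : ℕ}
    {m : Fin n → R} (f : Fin l → R)
    (hm : ∀ q : Fin n → R, ∑ i, q i * m i = 0 → ∀ i, φ (q i) = 0)
    (h : Ideal.span (Set.range f) = Ideal.span (Set.range m)) : n ≤ l := by
  have mem : ∀ {n' l' : ℕ} {g : Fin l' → R} {v : Fin n' → R},
      Ideal.span (Set.range g) = Ideal.span (Set.range v) →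
      ∀ i, ∃ c : Fin l' → R, ∑ j, c j * g j = v i := by
    intro n' l' g v hgv i
    have hi : v i ∈ Ideal.span (Set.range g) := hgv ▸ Ideal.subset_span ⟨i, rfl⟩
    simpa using (Submodule.mem_span_range_iff_exists_fun R).mp hi
  obtain ⟨V, hV⟩ : ∃ V : Matrix (Fin n) (Fin l) R, ∀ i, ∑ j, V i j * f j = m i :=
    ⟨Matrix.of fun i => (mem h i).choose, fun i => (mem h i).choose_spec⟩
  obtain ⟨U, hU⟩ : ∃ U : Matrix (Fin l) (Fin n) R, ∀ j, ∑ i, U j i * m i = f j :=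
    ⟨Matrix.of fun j => (mem h.symm j).choose, fun j => (mem h.symm j).choose_spec⟩
  -- The rows of `V * U - 1` are syzygies of `m`, so `φ (V * U) = 1` and `n ≤ rank (φ U) ≤ l`.
  have hVU : ∀ i k, φ ((V * U) i k) = (1 : Matrix (Fin n) (Fin n) K) i k := by
    intro i
    have hsyz : ∑ k, ((V * U) i k - (1 : Matrix (Fin n) (Fin n) R) i k) * m k = 0 := by
      simp only [sub_mul, Finset.sum_sub_distrib, Matrix.mul_apply, Finset.sum_mul,
        Matrix.one_apply, ite_mul, one_mul, zero_mul, Finset.sum_ite_eq, Finset.mem_univ, if_true]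
      rw [Finset.sum_comm]
      simp_rw [mul_assoc, ← Finset.mul_sum, hU, hV, sub_self]
    intro k
    have := hm _ hsyz k
    rw [map_sub, sub_eq_zero] at this
    rw [this, Matrix.one_apply, Matrix.one_apply]
    split_ifs <;> simp
  have hmap : V.map φ * U.map φ = 1 := by
    rw [← Matrix.map_mul]
    ext i k
    exact hVU i k
  calc n = (1 : Matrix (Fin n) (Fin n) K).rank := by simp
    _ = (V.map φ * U.map φ).rank := by rw [hmap]
    _ ≤ (U.map φ).rank := Matrix.rank_mul_le_right _ _
    _ ≤ l := Matrix.rank_le_height _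

theorem constantCoeff_eq_zero_of_aeval_eq_zero {σ k : Type*} [Field k] [DecidableEq σ] {j : σ}
    {q : MvPolynomial σ k} (h : aeval (Pi.single j (Polynomial.X : Polynomial k)) q = 0) :
    constantCoeff q = 0 := by
  have := congrArg (Polynomial.aeval (0 : k)) h
  rw [← AlgHom.comp_apply, comp_aeval] at this
  simpa [Pi.single_apply, apply_ite, eval_zero'] using this

end Syzygies

section SpaceCurves

variable {k : Type*} [Field k] {a : Fin 3 → ℕ}

theorem weight_fin_three {i j l : Fin 3} (hij : i ≠ j) (hil : i ≠ l) (hjl : j ≠ l)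
    (v : Fin 3 →₀ ℕ) : weight a v = v i * a i + v j * a j + v l * a l := by
  rw [Finsupp.weight_eq_sum, Fin.sum_univ_three]
  simp only [smul_eq_mul]
  fin_cases i <;> fin_cases j <;> fin_cases l <;> simp_all <;> ring

theorem isLeast_minMultiple (ha : ∀ i, 0 < a i) {i j l : Fin 3} (hij : i ≠ j) (hil : i ≠ l)
    (hjl : j ≠ l) : IsLeast (multiplesIn (a i) (a j) (a l)) (minMultiple a i) := by
  obtain ⟨hpos, v, hv, hw⟩ := minMultiple_spec hij.symm (ha j)
  refine ⟨⟨hpos, v j, v l, ?_⟩, ?_⟩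
  · rw [← hw, weight_fin_three hij hil hjl, hv, zero_mul, zero_add]
  · rintro d ⟨hd, x, y, h⟩
    refine minMultiple_le hd (v := single j x + single l y) (by simp [hij, hil]) ?_
    rw [weight_fin_three hij hil hjl, h]
    simp [hij, hil, hjl, hjl.symm]

theorem monomialCurveIdeal_eq_of_hasMinimalBinomials (ha : ∀ i, 0 < a i)
    {J : Ideal (MvPolynomial (Fin 3) k)} (hJ : HasMinimalBinomials J a)
    (hle : J ≤ monomialCurveIdeal k a) : monomialCurveIdeal k a = J :=
  le_antisymm (monomialCurveIdeal_le fun _ _ h => binomialMem_of_weight_eq ha hJ h) hle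

theorem exists_eq_span_pair_of_mul_eq (ha : ∀ i, 0 < a i) {i j l : Fin 3} (hij : i ≠ j)
    (hil : i ≠ l) (hjl : j ≠ l) (h : minMultiple a i * a i = minMultiple a j * a j) :
    ∃ f g : MvPolynomial (Fin 3) k, monomialCurveIdeal k a = Ideal.span {f, g} := by
  obtain ⟨-, w, hwl, hww⟩ := minMultiple_spec hil (ha i)
  set f := monomial (single i (minMultiple a i)) (1 : k) - monomial (single j (minMultiple a j)) 1
  set g := monomial (single l (minMultiple a l)) (1 : k) - monomial w 1
  have hf : BinomialMem (Ideal.span {f, g}) (single i (minMultiple a i))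
      (single j (minMultiple a j)) := Ideal.subset_span (by simp [f])
  have hg : BinomialMem (Ideal.span {f, g}) (single l (minMultiple a l)) w :=
    Ideal.subset_span (by simp [g])
  refine ⟨f, g, monomialCurveIdeal_eq_of_hasMinimalBinomials ha ?_ ?_⟩
  · intro m
    rcases (by omega : m = i ∨ m = j ∨ m = l) with rfl | rfl | rfl
    · exact ⟨_, by simp [hij], by simp [Finsupp.weight_single, h], hf⟩
    · exact ⟨_, by simp [hij], by simp [Finsupp.weight_single, h], hf.symm⟩
    · exact ⟨w, hwl, hww, hg⟩
  · rw [Ideal.span_le]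
    rintro _ (rfl | rfl)
    · exact binomialMem_monomialCurveIdeal (by simp [Finsupp.weight_single, h])
    · exact binomialMem_monomialCurveIdeal (by simp [Finsupp.weight_single, hww])

variable (k) in
def IsMinorsIdeal (I : Ideal (MvPolynomial (Fin 3) k)) : Prop :=
  ∃ α₁ α₂ β₁ β₂ γ₁ γ₂ : ℕ, 0 < α₁ ∧ 0 < α₂ ∧ 0 < β₁ ∧ 0 < β₂ ∧ 0 < γ₁ ∧ 0 < γ₂ ∧
    I = Ideal.span
      {(X 0 : MvPolynomial (Fin 3) k) ^ α₁ * X 2 ^ γ₂ - X 1 ^ (β₁ + β₂),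
       (X 0 : MvPolynomial (Fin 3) k) ^ α₁ * X 0 ^ α₂ - X 1 ^ β₂ * X 2 ^ γ₁,
       (X 1 : MvPolynomial (Fin 3) k) ^ β₁ * X 0 ^ α₂ - X 2 ^ (γ₁ + γ₂)}

theorem monomialCurveIdeal_eq_span_minors (ha : ∀ i, 0 < a i) {α₁ α₂ β₁ β₂ γ₁ γ₂ : ℕ}
    (e0 : minMultiple a 0 = α₁ + α₂) (e1 : minMultiple a 1 = β₁ + β₂)
    (e2 : minMultiple a 2 = γ₁ + γ₂) (r0 : (α₁ + α₂) * a 0 = β₂ * a 1 + γ₁ * a 2)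
    (r1 : (β₁ + β₂) * a 1 = γ₂ * a 2 + α₁ * a 0) (r2 : (γ₁ + γ₂) * a 2 = α₂ * a 0 + β₁ * a 1) :
    monomialCurveIdeal k a = Ideal.span
      {(X 0 : MvPolynomial (Fin 3) k) ^ α₁ * X 2 ^ γ₂ - X 1 ^ (β₁ + β₂),
       (X 0 : MvPolynomial (Fin 3) k) ^ α₁ * X 0 ^ α₂ - X 1 ^ β₂ * X 2 ^ γ₁,
       (X 1 : MvPolynomial (Fin 3) k) ^ β₁ * X 0 ^ α₂ - X 2 ^ (γ₁ + γ₂)} := by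
  refine monomialCurveIdeal_eq_of_hasMinimalBinomials ha ?_ ?_
  · intro i
    rcases (by omega : i = 0 ∨ i = 1 ∨ i = 2) with rfl | rfl | rfl
    · rw [e0]
      refine ⟨single 1 β₂ + single 2 γ₁, by simp, by simp [Finsupp.weight_single, r0], ?_⟩
      rw [binomialMem_iff, monomial_single_add_single, ← X_pow_eq_monomial, pow_add (X 0)]
      exact Ideal.subset_span (by simp)
    · rw [e1]
      refine ⟨single 2 γ₂ + single 0 α₁, by simp, by simp [Finsupp.weight_single, r1], ?_⟩
      refine BinomialMem.symm ?_
      rw [binomialMem_iff, monomial_single_add_single, ← X_pow_eq_monomial, mul_comm,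
        add_comm β₁]
      exact Ideal.subset_span (by simp)
    · rw [e2]
      refine ⟨single 0 α₂ + single 1 β₁, by simp, by simp [Finsupp.weight_single, r2], ?_⟩
      refine BinomialMem.symm ?_
      rw [binomialMem_iff, monomial_single_add_single, ← X_pow_eq_monomial,
        mul_comm (X 0 ^ α₂)]
      exact Ideal.subset_span (by simp)
  · rw [Ideal.span_le]
    rintro _ (rfl | rfl | rfl) <;>
      simp only [SetLike.mem_coe, monomialCurveIdeal, RingHom.mem_ker, map_sub, map_mul, map_pow,
        aeval_X, ← pow_mul, ← pow_add, sub_eq_zero] <;> congr 1 <;> linarith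

theorem isMinorsIdeal_of_mul_ne (ha : ∀ i, 0 < a i)
    (h01 : minMultiple a 0 * a 0 ≠ minMultiple a 1 * a 1)
    (h12 : minMultiple a 1 * a 1 ≠ minMultiple a 2 * a 2)
    (h20 : minMultiple a 2 * a 2 ≠ minMultiple a 0 * a 0) :
    IsMinorsIdeal k (monomialCurveIdeal k a) := by
  have h0 := isLeast_minMultiple ha (i := 0) (j := 1) (l := 2) (by decide) (by decide) (by decide)
  have h1 := isLeast_minMultiple ha (i := 1) (j := 2) (l := 0) (by decide) (by decide) (by decide)
  have h2 := isLeast_minMultiple ha (i := 2) (j := 0) (l := 1) (by decide) (by decide) (by decide)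
  obtain ⟨-, β₂, γ₁, r0⟩ := h0.1
  obtain ⟨-, γ₂, α₁, r1⟩ := h1.1
  obtain ⟨-, α₂, β₁, r2⟩ := h2.1
  obtain ⟨hβ₂, hγ₁⟩ := h0.pos_of_mul_eq h1 h2 (ha 0) (ha 1) (ha 2) h01 h12 h20 r0
  obtain ⟨hγ₂, hα₁⟩ := h1.pos_of_mul_eq h2 h0 (ha 1) (ha 2) (ha 0) h12 h20 h01 r1
  obtain ⟨hα₂, hβ₁⟩ := h2.pos_of_mul_eq h0 h1 (ha 2) (ha 0) (ha 1) h20 h01 h12 r2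
  obtain ⟨e0, e1, e2⟩ := h0.eq_add_of_mul_eq h1 h2 (ha 0) (ha 1) (ha 2) r0 r1 r2 hβ₂ hγ₁ hγ₂
    hα₁ hα₂ hβ₁
  exact ⟨α₁, α₂, β₁, β₂, γ₁, γ₂, hα₁, hα₂, hβ₁, hβ₂, hγ₁, hγ₂,
    monomialCurveIdeal_eq_span_minors ha e0 e1 e2 (e0 ▸ r0) (e1 ▸ r1) (e2 ▸ r2)⟩

theorem constantCoeff_eq_zero_of_sum_mul_minors_eq_zero {α₁ α₂ β₁ β₂ γ₁ γ₂ : ℕ}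
    (hα₁ : 0 < α₁) (hα₂ : 0 < α₂) (hβ₁ : 0 < β₁) (hβ₂ : 0 < β₂) (hγ₁ : 0 < γ₁) (hγ₂ : 0 < γ₂)
    (q : Fin 3 → MvPolynomial (Fin 3) k)
    (hq : ∑ i, q i * (![X 0 ^ α₁ * X 2 ^ γ₂ - X 1 ^ (β₁ + β₂),
      X 0 ^ α₁ * X 0 ^ α₂ - X 1 ^ β₂ * X 2 ^ γ₁, X 1 ^ β₁ * X 0 ^ α₂ - X 2 ^ (γ₁ + γ₂)] :
        Fin 3 → MvPolynomial (Fin 3) k) i = 0) (i : Fin 3) : constantCoeff (q i) = 0 := by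
  have key := fun j : Fin 3 => congrArg (aeval (Pi.single j (Polynomial.X : Polynomial k))) hq
  simp only [Fin.sum_univ_three, map_zero, map_add, map_mul, map_sub, map_pow, aeval_X,
    Matrix.cons_val_zero, Matrix.cons_val_one, Matrix.cons_val_two] at key
  have hne : α₁ ≠ 0 ∧ α₂ ≠ 0 ∧ β₁ ≠ 0 ∧ β₂ ≠ 0 ∧ γ₁ ≠ 0 ∧ γ₂ ≠ 0 := by omega
  rcases (by omega : i = 0 ∨ i = 1 ∨ i = 2) with rfl | rfl | rfl
  · exact constantCoeff_eq_zero_of_aeval_eq_zero (j := 1) (by simpa [hne] using key 1)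
  · exact constantCoeff_eq_zero_of_aeval_eq_zero (j := 0) (by simpa [hne] using key 0)
  · exact constantCoeff_eq_zero_of_aeval_eq_zero (j := 2) (by simpa [hne] using key 2)

theorem not_isMinorsIdeal_span_pair (f g : MvPolynomial (Fin 3) k) :
    ¬ IsMinorsIdeal k (Ideal.span {f, g}) := by
  rintro ⟨α₁, α₂, β₁, β₂, γ₁, γ₂, hα₁, hα₂, hβ₁, hβ₂, hγ₁, hγ₂, h⟩
  have := card_le_of_span_range_eq constantCoeff ![f, g]
    (constantCoeff_eq_zero_of_sum_mul_minors_eq_zero hα₁ hα₂ hβ₁ hβ₂ hγ₁ hγ₂)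
    (by rwa [Matrix.range_cons_cons_empty, Matrix.range_cons, Matrix.range_cons_cons_empty,
      Set.singleton_union])
  omega

end SpaceCurves

theorem herzog_structure_general (k : Type*) [Field k] (a : Fin 3 → ℕ)
    (hpos : ∀ i, 0 < a i) :
    Xor'
      (∃ f g : MvPolynomial (Fin 3) k, monomialCurveIdeal k a = Ideal.span {f, g})
      (∃ α₁ α₂ β₁ β₂ γ₁ γ₂ : ℕ, 0 < α₁ ∧ 0 < α₂ ∧ 0 < β₁ ∧ 0 < β₂ ∧ 0 < γ₁ ∧ 0 < γ₂ ∧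
        monomialCurveIdeal k a = Ideal.span
          {(X 0 : MvPolynomial (Fin 3) k) ^ α₁ * X 2 ^ γ₂ - X 1 ^ (β₁ + β₂),
           (X 0 : MvPolynomial (Fin 3) k) ^ α₁ * X 0 ^ α₂ - X 1 ^ β₂ * X 2 ^ γ₁,
           (X 1 : MvPolynomial (Fin 3) k) ^ β₁ * X 0 ^ α₂ - X 2 ^ (γ₁ + γ₂)}) := by
  have hexcl : ∀ {f g : MvPolynomial (Fin 3) k}, monomialCurveIdeal k a = Ideal.span {f, g} →
      ¬ IsMinorsIdeal k (monomialCurveIdeal k a) :=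
    fun hfg => hfg ▸ not_isMinorsIdeal_span_pair _ _
  by_cases hM : minMultiple a 0 * a 0 = minMultiple a 1 * a 1 ∨
      minMultiple a 1 * a 1 = minMultiple a 2 * a 2 ∨ minMultiple a 2 * a 2 = minMultiple a 0 * a 0
  · obtain ⟨f, g, hfg⟩ : ∃ f g : MvPolynomial (Fin 3) k,
        monomialCurveIdeal k a = Ideal.span {f, g} := by
      rcases hM with h | h | h
      · exact exists_eq_span_pair_of_mul_eq hpos (l := 2) (by decide) (by decide) (by decide) h
      · exact exists_eq_span_pair_of_mul_eq hpos (l := 0) (by decide) (by decide) (by decide) h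
      · exact exists_eq_span_pair_of_mul_eq hpos (l := 1) (by decide) (by decide) (by decide) h
    exact Or.inl ⟨⟨f, g, hfg⟩, hexcl hfg⟩
  · push Not at hM
    have hB := isMinorsIdeal_of_mul_ne (k := k) hpos hM.1 hM.2.1 hM.2.2
    exact Or.inr ⟨hB, fun ⟨f, g, hfg⟩ => hexcl hfg hB⟩

/-- **Herzog (1970).** A monomial space curve is either a complete intersection, or its
ideal is generated by the three `2 × 2` minors of a matrix with rows
`(X₁^α₁, X₂^β₁, X₃^γ₁)` and `(X₂^β₂, X₃^γ₂, X₁^α₂)` — and exactly one of these occurs. -/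
theorem herzog_structure (k : Type*) [Field k] (a : Fin 3 → ℕ)
    (hpos : ∀ i, 0 < a i) (hgcd : Nat.gcd (a 0) (Nat.gcd (a 1) (a 2)) = 1) :
    Xor'
      (∃ f g : MvPolynomial (Fin 3) k, monomialCurveIdeal k a = Ideal.span {f, g})
      (∃ α₁ α₂ β₁ β₂ γ₁ γ₂ : ℕ, 0 < α₁ ∧ 0 < α₂ ∧ 0 < β₁ ∧ 0 < β₂ ∧ 0 < γ₁ ∧ 0 < γ₂ ∧
        monomialCurveIdeal k a = Ideal.span
          {(X 0 : MvPolynomial (Fin 3) k) ^ α₁ * X 2 ^ γ₂ - X 1 ^ (β₁ + β₂),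
           (X 0 : MvPolynomial (Fin 3) k) ^ α₁ * X 0 ^ α₂ - X 1 ^ β₂ * X 2 ^ γ₁,
           (X 1 : MvPolynomial (Fin 3) k) ^ β₁ * X 0 ^ α₂ - X 2 ^ (γ₁ + γ₂)}) :=
  herzog_structure_general k a hpos
end

section
/- Let k be a field, d ≥ 3, and let a_1 < a_2 < … < a_d be positive integers forming an arithmetic progression with gcd(a_1,…,a_d) = 1. Let p(a) ⊆ k[X_1,…,X_d] be the kernel of the k-algebra homomorphism sending X_i to T^{a_i}. Then there exist d−1 elements f_1,…,f_{d−1} ∈ p(a) such that √(f_1,…,f_{d−1}) = p(a); that is, p(a) is a set-theoretic complete intersection. -/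
open MvPolynomial Finset

universe u

theorem Ideal.le_radical_of_forall_algHom_field {k : Type*} {R : Type u} [CommRing k]
    [CommRing R] [Algebra k R] {I J : Ideal R}
    (h : ∀ (K : Type u) [Field K] [Algebra k K] (φ : R →ₐ[k] K),
      I ≤ RingHom.ker φ → J ≤ RingHom.ker φ) :
    J ≤ I.radical := by
  rw [Ideal.radical_eq_sInf]
  refine le_sInf fun q ⟨hIq, hq⟩ => ?_
  let φ : R →ₐ[k] FractionRing (R ⧸ q) :=
    (IsScalarTower.toAlgHom k (R ⧸ q) _).comp (Ideal.Quotient.mkₐ k q)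
  have hker : RingHom.ker φ = q :=
    (RingHom.ker_comp_of_injective (Ideal.Quotient.mk q)
      (IsFractionRing.injective (R ⧸ q) _)).trans Ideal.mk_ker
  exact hker ▸ h _ φ (hIq.trans hker.ge)

theorem sub_pow_eq_sum_neg_one_pow {R : Type*} [CommRing R] (w u : R) (n : ℕ) :
    (w - u) ^ n = ∑ j ∈ range (n + 1), (-1) ^ j * n.choose j * u ^ j * w ^ (n - j) := by
  rw [sub_eq_neg_add, add_pow]
  refine sum_congr rfl fun j _ => ?_
  rw [neg_pow]
  ring

theorem exists_pow_eq_of_pow_eq_pow {G : Type*} [CommGroup G] {A m : ℕ} (h : A.Coprime m)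
    {s v : G} (hsv : v ^ A = s ^ m) : ∃ t : G, t ^ A = s ∧ t ^ m = v := by
  have hb : (A : ℤ) * A.gcdA m + m * A.gcdB m = 1 := by
    rw [← Nat.gcd_eq_gcd_ab, h, Nat.cast_one]
  have hsv' : v ^ (A : ℤ) = s ^ (m : ℤ) := by simpa only [zpow_natCast] using hsv
  refine ⟨s ^ A.gcdA m * v ^ A.gcdB m, ?_, ?_⟩
  · calc (s ^ A.gcdA m * v ^ A.gcdB m) ^ A
        = s ^ ((A : ℤ) * A.gcdA m) * (v ^ (A : ℤ)) ^ A.gcdB m := by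
          rw [← zpow_natCast, mul_zpow, ← zpow_mul, ← zpow_mul, ← zpow_mul, mul_comm _ (A : ℤ),
            mul_comm (A.gcdB m)]
      _ = s := by rw [hsv', ← zpow_mul, ← zpow_add, hb, zpow_one]
  · calc (s ^ A.gcdA m * v ^ A.gcdB m) ^ m
        = (s ^ (m : ℤ)) ^ A.gcdA m * v ^ ((m : ℤ) * A.gcdB m) := by
          rw [← zpow_natCast, mul_zpow, ← zpow_mul, ← zpow_mul, ← zpow_mul, mul_comm _ (m : ℤ),
            mul_comm (A.gcdB m)]
      _ = v := by rw [← hsv', ← zpow_mul, ← zpow_add, hb, zpow_one]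

namespace MonomialCurve

-- The casts `ℕ → Fin (e + 1)` below reduce modulo `e + 1`; every index used is at most `e`.
open Fin.NatCast

section Polynomials

variable (R : Type*) [CommRing R]

noncomputable def chainPoly (e n : ℕ) : MvPolynomial (Fin (e + 1)) R :=
  ∑ j ∈ range (n + 1),
    (-1) ^ j * (n.choose j : MvPolynomial (Fin (e + 1)) R) * X (n : Fin (e + 1)) ^ j *
      X (j : Fin (e + 1)) * X ((n + 1 : ℕ) : Fin (e + 1)) ^ (n - j)

/-- The `j`-th monomial is `X_e^q X_r X_0^p` with `e q + r = (e - j) A` and `q + 1 + p = A + j m`,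
so that it takes the value `s^(A + j m) v^((e - j) A)` at `xᵢ = s vⁱ`. -/
noncomputable def lastPoly (e A m : ℕ) : MvPolynomial (Fin (e + 1)) R :=
  X (e : Fin (e + 1)) ^ A +
    ∑ j ∈ Ico 1 (e + 1),
      (-1) ^ j * (e.choose j : MvPolynomial (Fin (e + 1)) R) *
        X (e : Fin (e + 1)) ^ ((e - j) * A / e) * X (((e - j) * A % e : ℕ) : Fin (e + 1)) *
          X 0 ^ (A + j * m - (e - j) * A / e - 1)

theorem lastPoly_exponent_eq {e A m j : ℕ} (hA : 0 < A) (hj : j ∈ Ico 1 (e + 1)) :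
    (e - j) * A / e + 1 + (A + j * m - (e - j) * A / e - 1) = A + j * m := by
  rw [mem_Ico] at hj
  have : (e - j) * A / e < A :=
    Nat.div_lt_of_lt_mul (by nlinarith [Nat.sub_lt (by omega : 0 < e) hj.1])
  omega

variable {R} {L : Type*} [CommRing L] [Algebra R L] {e : ℕ}

theorem aeval_chainPoly_of_geometric {n : ℕ} {x : Fin (e + 1) → L} {s v : L}
    (hx : ∀ i ≤ n, x i = s * v ^ i) :
    aeval x (chainPoly R e n) = s * (x (n + 1 : ℕ) - s * v ^ (n + 1)) ^ n := by
  rw [sub_pow_eq_sum_neg_one_pow, mul_sum, chainPoly, map_sum]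
  refine sum_congr rfl fun j hj => ?_
  simp only [map_mul, map_pow, map_neg, map_one, map_natCast, aeval_X,
    hx n le_rfl, hx j (mem_range_succ_iff.mp hj)]
  ring

theorem aeval_chainPoly_of_eq_zero {n : ℕ} {x : Fin (e + 1) → L} (hx : ∀ i < n, x i = 0) :
    aeval x (chainPoly R e n) = (-1) ^ n * x n ^ (n + 1) := by
  rw [chainPoly, map_sum, sum_range_succ, sum_eq_zero fun j hj => ?_]
  · simp only [map_mul, map_pow, map_neg, map_one, map_natCast, aeval_X, Nat.choose_self,
      Nat.sub_self]
    ring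
  · simp [hx j (mem_range.mp hj)]

theorem aeval_lastPoly_of_geometric {A m : ℕ} (hA : 0 < A) {x : Fin (e + 1) → L} {s v : L}
    (hx : ∀ i ≤ e, x i = s * v ^ i) :
    aeval x (lastPoly R e A m) = s ^ A * (v ^ A - s ^ m) ^ e := by
  have hterm : ∀ j ∈ Ico 1 (e + 1),
      aeval x ((-1) ^ j * (e.choose j : MvPolynomial (Fin (e + 1)) R) *
        X (e : Fin (e + 1)) ^ ((e - j) * A / e) * X (((e - j) * A % e : ℕ) : Fin (e + 1)) *
          X 0 ^ (A + j * m - (e - j) * A / e - 1)) =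
      s ^ A * ((-1) ^ j * e.choose j * (s ^ m) ^ j * (v ^ A) ^ (e - j)) := by
    intro j hj
    have he : 0 < e := by rw [mem_Ico] at hj; omega
    simp only [map_mul, map_pow, map_neg, map_one, map_natCast, aeval_X, hx e le_rfl,
      hx _ (Nat.mod_lt _ he).le, ← Nat.cast_zero (R := Fin (e + 1)), hx 0 (Nat.zero_le _)]
    calc _ = (-1) ^ j * e.choose j *
          s ^ ((e - j) * A / e + 1 + (A + j * m - (e - j) * A / e - 1)) *
          v ^ (e * ((e - j) * A / e) + (e - j) * A % e) := by ring
      _ = _ := by rw [lastPoly_exponent_eq hA hj, Nat.div_add_mod]; ring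
  rw [lastPoly, map_add, map_sum, sum_congr rfl hterm, ← mul_sum, sub_pow_eq_sum_neg_one_pow,
    range_eq_Ico, sum_eq_sum_Ico_succ_bot (Nat.succ_pos e), map_pow, aeval_X, hx e le_rfl,
    mul_add]
  congr 1
  simp only [pow_zero, Nat.choose_zero_right, Nat.cast_one, Nat.sub_zero]
  ring

theorem aeval_lastPoly_of_eq_zero {A m : ℕ} {x : Fin (e + 1) → L} (hx : ∀ i < e, x i = 0) :
    aeval x (lastPoly R e A m) = x e ^ A := by
  rw [lastPoly, map_add, map_sum, sum_eq_zero fun j hj => ?_, add_zero, map_pow, aeval_X]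
  have he : 0 < e := by rw [mem_Ico] at hj; omega
  simp [hx _ (Nat.mod_lt _ he)]

end Polynomials

section Points

variable {R : Type*} [CommRing R] {e : ℕ}

theorem eq_zero_of_aeval_chainPoly_eq_zero {L : Type*} [CommRing L] [Algebra R L] [IsReduced L]
    {x : Fin (e + 1) → L} (hx0 : x 0 = 0)
    (hchain : ∀ n, 0 < n → n < e → aeval x (chainPoly R e n) = 0) :
    ∀ i < e, x i = 0 := by
  intro i
  induction i using Nat.strong_induction_on with
  | _ n ih =>
    intro hn
    rcases Nat.eq_zero_or_pos n with rfl | hpos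
    · exact hx0
    have h := hchain n hpos hn
    rw [aeval_chainPoly_of_eq_zero fun i hi => ih i hi (hi.trans hn),
      ((isUnit_neg_one).pow n).mul_right_eq_zero] at h
    exact eq_zero_of_pow_eq_zero h

variable {K : Type*} [Field K] [Algebra R K]

theorem geometric_of_aeval_chainPoly_eq_zero {x : Fin (e + 1) → K} (hx0 : x 0 ≠ 0)
    (hchain : ∀ n, 0 < n → n < e → aeval x (chainPoly R e n) = 0) :
    ∃ v, ∀ i ≤ e, x i = x 0 * v ^ i := by
  refine ⟨x 1 / x 0, fun i => ?_⟩
  induction i using Nat.strong_induction_on with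
  | _ i ih =>
    intro hi
    match i with
    | 0 => simp
    | 1 => simp [mul_div_cancel₀ _ hx0]
    | n + 2 =>
      have h := hchain (n + 1) n.succ_pos (by omega)
      rw [aeval_chainPoly_of_geometric fun j hj => ih j (by omega) (by omega),
        mul_eq_zero, pow_eq_zero_iff n.succ_ne_zero, sub_eq_zero] at h
      exact h.resolve_left hx0

theorem exists_eq_pow_of_aeval_eq_zero {A m : ℕ} (hA : 0 < A) (hco : A.Coprime m) (he : 0 < e)
    {x : Fin (e + 1) → K} (hchain : ∀ n, 0 < n → n < e → aeval x (chainPoly R e n) = 0)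
    (hlast : aeval x (lastPoly R e A m) = 0) :
    ∃ t : K, ∀ i : Fin (e + 1), x i = t ^ (A + i * m) := by
  by_cases hx0 : x 0 = 0
  · have hzero := eq_zero_of_aeval_chainPoly_eq_zero hx0 hchain
    rw [aeval_lastPoly_of_eq_zero hzero, pow_eq_zero_iff hA.ne'] at hlast
    refine ⟨0, fun i => ?_⟩
    rw [zero_pow (by omega), ← Fin.cast_val_eq_self i]
    rcases (Nat.lt_succ_iff.mp i.isLt).lt_or_eq with hi | hi
    · exact hzero _ hi
    · rw [hi, hlast]
  · obtain ⟨v, hgeom⟩ := geometric_of_aeval_chainPoly_eq_zero hx0 hchain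
    rw [aeval_lastPoly_of_geometric hA hgeom, mul_eq_zero, pow_eq_zero_iff he.ne', sub_eq_zero,
      or_iff_right (pow_ne_zero _ hx0)] at hlast
    have hv : v ≠ 0 := fun hv =>
      hx0 (eq_zero_of_pow_eq_zero (by rw [← hlast, hv, zero_pow hA.ne']))
    obtain ⟨t, hts, htv⟩ := exists_pow_eq_of_pow_eq_pow hco
      (s := Units.mk0 (x 0) hx0) (v := Units.mk0 v hv) (Units.ext (by simpa using hlast))
    refine ⟨t, fun i => ?_⟩
    rw [← Fin.cast_val_eq_self i, hgeom _ (Nat.lt_succ_iff.mp i.isLt), Fin.cast_val_eq_self,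
      pow_add, pow_mul', ← Units.val_pow_eq_pow_val, ← Units.val_pow_eq_pow_val, hts, htv,
      Units.val_mk0, Units.val_mk0]

end Points

section Ideal

variable {k : Type*} [Field k] {d : ℕ}

theorem isPrime_monomialCurveIdeal (a : Fin d → ℕ) : (monomialCurveIdeal k a).IsPrime :=
  RingHom.ker_isPrime _

theorem aeval_pow_eq_zero_of_mem_monomialCurveIdeal {L : Type*} [CommRing L] [Algebra k L]
    {a : Fin d → ℕ} {g : MvPolynomial (Fin d) k} (hg : g ∈ monomialCurveIdeal k a) (t : L) :
    aeval (fun i => t ^ a i) g = 0 := by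
  have : aeval (fun i => t ^ a i) =
      (Polynomial.aeval t).comp (aeval fun i => (Polynomial.X : Polynomial k) ^ a i) :=
    algHom_ext fun i => by simp
  rw [this, AlgHom.comp_apply, RingHom.mem_ker.mp hg, map_zero]

variable {e A m : ℕ}

theorem X_pow_eq_geometric {i : ℕ} (hi : i ≤ e) :
    (Polynomial.X : Polynomial k) ^ (A + ((i : Fin (e + 1)) : ℕ) * m) =
      Polynomial.X ^ A * (Polynomial.X ^ m) ^ i := by
  rw [Fin.val_cast_of_lt (Nat.lt_succ_of_le hi), pow_add, pow_mul']

theorem chainPoly_mem_monomialCurveIdeal {n : ℕ} (hn : 0 < n) (hne : n < e) :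
    chainPoly k e n ∈ monomialCurveIdeal k fun i : Fin (e + 1) => A + i * m := by
  rw [monomialCurveIdeal, RingHom.mem_ker,
    aeval_chainPoly_of_geometric fun i hi => X_pow_eq_geometric (hi.trans hne.le),
    X_pow_eq_geometric hne, sub_self, zero_pow hn.ne', mul_zero]

theorem lastPoly_mem_monomialCurveIdeal (hA : 0 < A) (he : 0 < e) :
    lastPoly k e A m ∈ monomialCurveIdeal k fun i : Fin (e + 1) => A + i * m := by
  rw [monomialCurveIdeal, RingHom.mem_ker,
    aeval_lastPoly_of_geometric hA fun i hi => X_pow_eq_geometric hi,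
    ← pow_mul, ← pow_mul, ← pow_mul, mul_comm m A, sub_self, zero_pow he.ne', mul_zero]

theorem monomialCurveIdeal_le_ker {K : Type*} [Field K] [Algebra k K] (hA : 0 < A)
    (hco : A.Coprime m) (he : 0 < e) (φ : MvPolynomial (Fin (e + 1)) k →ₐ[k] K)
    (hchain : ∀ n, 0 < n → n < e → φ (chainPoly k e n) = 0) (hlast : φ (lastPoly k e A m) = 0) :
    monomialCurveIdeal k (fun i : Fin (e + 1) => A + i * m) ≤ RingHom.ker φ := by
  rw [aeval_unique φ] at hchain hlast ⊢
  obtain ⟨t, ht⟩ := exists_eq_pow_of_aeval_eq_zero hA hco he hchain hlast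
  intro g hg
  rw [RingHom.mem_ker, show φ ∘ X = fun i : Fin (e + 1) => t ^ (A + i * m) from funext ht]
  exact aeval_pow_eq_zero_of_mem_monomialCurveIdeal hg t

end Ideal

end MonomialCurve

open MonomialCurve in
/-- **Patil (1990).** A monomial curve in `𝔸^d` given by an increasing arithmetic
progression `a_1 < a_2 < ⋯ < a_d` with `gcd(a_1, …, a_d) = 1` is a set-theoretic
complete intersection. -/
theorem patil_arithmetic_progression_stci (k : Type*) [Field k] (d : ℕ) (hd : 3 ≤ d)
    (a : Fin d → ℕ)
    (hap : ∃ a₁ m : ℕ, 0 < a₁ ∧ 0 < m ∧ ∀ i : Fin d, a i = a₁ + i.val * m)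
    (hgcd : Finset.univ.gcd a = 1) :
    ∃ f : Fin (d - 1) → MvPolynomial (Fin d) k,
      (∀ i, f i ∈ monomialCurveIdeal k a) ∧
      (Ideal.span (Set.range f)).radical = monomialCurveIdeal k a := by
  obtain ⟨A, m, hA, -, ha⟩ := hap
  obtain ⟨e, rfl⟩ : ∃ e, d = e + 1 := ⟨d - 1, by omega⟩
  obtain rfl : a = fun i => A + i.val * m := funext ha
  have hco : A.Coprime m := Nat.dvd_one.mp <| hgcd ▸ Finset.dvd_gcd fun i _ =>
    Nat.dvd_add (Nat.gcd_dvd_left A m) (dvd_mul_of_dvd_right (Nat.gcd_dvd_right A m) _)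
  let f : Fin e → MvPolynomial (Fin (e + 1)) k := fun i =>
    if (i : ℕ) + 1 < e then chainPoly k e (i + 1) else lastPoly k e A m
  have hchain {n : ℕ} (hn : 0 < n) (hne : n < e) : chainPoly k e n ∈ Set.range f :=
    ⟨⟨n - 1, by omega⟩, by simp [f, Nat.sub_add_cancel hn, hne]⟩
  have hlast : lastPoly k e A m ∈ Set.range f :=
    ⟨⟨e - 1, by omega⟩, by simp [f, show ¬e - 1 + 1 < e by omega]⟩
  have hf : ∀ i, f i ∈ monomialCurveIdeal k fun i : Fin (e + 1) => A + i.val * m := fun i => by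
    by_cases hi : (i : ℕ) + 1 < e
    · simpa [f, hi] using chainPoly_mem_monomialCurveIdeal i.val.succ_pos hi
    · simpa [f, hi] using lastPoly_mem_monomialCurveIdeal hA (by omega)
  refine ⟨f, hf, le_antisymm ?_ ?_⟩
  · exact (Ideal.radical_mono (Ideal.span_le.mpr (Set.range_subset_iff.mpr hf))).trans_eq
      (isPrime_monomialCurveIdeal _).radical
  · exact Ideal.le_radical_of_forall_algHom_field fun K _ _ φ hφ =>
      monomialCurveIdeal_le_ker hA hco (by omega) φ
        (fun n hn hne => hφ (Ideal.subset_span (hchain hn hne)))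
        (hφ (Ideal.subset_span hlast))
end

section
/- Let k be a field and let q, m be positive integers with gcd(q,m) = 1. Put a_i = 2q+1+(i−1)m for i = 1,2,3, and let p(a) ⊆ k[X_1,X_2,X_3] be the kernel of the k-algebra homomorphism sending X_i to T^{a_i}. Then there exist two polynomials f, g ∈ p(a) such that √(f,g) = p(a). -/
/-!
Index from `0` and write `a_i = c (n + i m)` with `c = gcd (2q + 1, m)`, so that `n, m` are coprime;
scaling the weights by `c` does not change `p(a)`. Take `f = X₀X₂ - X₁²` and
`g = X₂ⁿ + X₀^(n+2m) - 2 X₀^m X₁ⁿ`, both in `p(a)`. For a prime `P ⊇ (f, g)` let `x_i` be the image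
of `X_i` in the fraction field of `k[X]/P`. If `x₀ ≠ 0`, put `s = x₁ / x₀`: then `f` gives
`x₂ = x₀ s²` and `g` becomes `x₀ⁿ (sⁿ - x₀ᵐ)² = 0`, so `sⁿ = x₀ᵐ`, and coprimality gives `t` with
`x₀ = tⁿ`, `s = tᵐ`, i.e. `x_i = t^(n + i m)` (if `x₀ = 0`, all `x_i` vanish and `t = 0`).
Every element of `p(a)` vanishes at such a point, hence lies in `P`; so `p(a) ⊆ √(f, g)`.
-/

open MvPolynomial

section

variable {k : Type*} [Field k] {d : ℕ}

theorem monomialCurveIdeal_le_ker {R : Type*} [CommRing R] [Algebra k R] {a : Fin d → ℕ}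
    (φ : MvPolynomial (Fin d) k →ₐ[k] R) (t : R) (hφ : ∀ i, φ (X i) = t ^ a i) :
    monomialCurveIdeal k a ≤ RingHom.ker φ := by
  have hφ' : φ = (Polynomial.aeval t).comp (aeval fun i => Polynomial.X ^ a i) := by
    ext i
    simp [hφ]
  intro p hp
  rw [RingHom.mem_ker, hφ', AlgHom.comp_apply, (RingHom.mem_ker).1 hp, map_zero]

theorem monomialCurveIdeal_smul (a : Fin d → ℕ) {c : ℕ} (hc : 0 < c) :
    monomialCurveIdeal k (c • a) = monomialCurveIdeal k a := by
  refine le_antisymm (fun p hp => ?_) (monomialCurveIdeal_le_ker _ (Polynomial.X ^ c) ?_)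
  · rw [monomialCurveIdeal, RingHom.mem_ker] at hp ⊢
    apply Polynomial.expand_injective hc
    rw [comp_aeval_apply, map_zero, ← hp]
    simp [← pow_mul]
  · simp [← pow_mul]

end

section

variable (k : Type*) [CommRing k]

noncomputable def vallaF : MvPolynomial (Fin 3) k := X 0 * X 2 - X 1 ^ 2

noncomputable def vallaG (n m : ℕ) : MvPolynomial (Fin 3) k :=
  X 2 ^ n + X 0 ^ (n + 2 * m) - 2 * (X 0 ^ m * X 1 ^ n)

end

section

variable {k : Type*} [CommRing k] {n m : ℕ}

theorem exists_eq_pow_of_aeval_vallaF_vallaG_eq_zero {K : Type*} [Field K] [Algebra k K]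
    (hn : 0 < n) (hnm : n.Coprime m) (x : Fin 3 → K)
    (hf : aeval x (vallaF k) = 0) (hg : aeval x (vallaG k n m) = 0) :
    ∃ t : K, ∀ i : Fin 3, x i = t ^ (n + i * m) := by
  simp only [vallaF, vallaG, map_sub, map_add, map_mul, map_pow, map_ofNat, aeval_X] at hf hg
  rw [sub_eq_zero] at hf
  by_cases hx0 : x 0 = 0
  · have hx1 : x 1 = 0 := by simpa [hx0] using hf.symm
    have hx2 : x 2 = 0 := by simpa [hx0, hx1, hn.ne'] using hg
    refine ⟨0, fun i => ?_⟩
    rw [zero_pow (by omega)]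
    fin_cases i <;> assumption
  · set s := x 1 / x 0
    have hx1 : x 1 = x 0 * s := (mul_div_cancel₀ _ hx0).symm
    have hx2 : x 2 = x 0 * s ^ 2 := mul_left_cancel₀ hx0 (by rw [hf, hx1]; ring)
    have hs : s ^ n = x 0 ^ m := by
      have : x 0 ^ n * (s ^ n - x 0 ^ m) ^ 2 = 0 := by
        rw [hx1, hx2] at hg; linear_combination hg
      simpa [hx0, sub_eq_zero] using this
    obtain ⟨t, hst, hxt⟩ := (pow_eq_pow_iff_of_coprime hnm).1 hs
    refine ⟨t, fun i => ?_⟩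
    fin_cases i <;> simp [hx1, hx2, hst, hxt] <;> ring

end

section

variable {k : Type*} [Field k] {n m : ℕ}

theorem vallaF_mem_monomialCurveIdeal :
    vallaF k ∈ monomialCurveIdeal k (fun i : Fin 3 => n + i * m) := by
  simp only [vallaF, monomialCurveIdeal, RingHom.mem_ker, map_sub, map_mul, map_pow, aeval_X]
  simp only [Fin.isValue, Fin.val_zero, Fin.val_one, Fin.val_two, ← pow_mul, ← pow_add]
  ring_nf

theorem vallaG_mem_monomialCurveIdeal :
    vallaG k n m ∈ monomialCurveIdeal k (fun i : Fin 3 => n + i * m) := by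
  simp only [vallaG, monomialCurveIdeal, RingHom.mem_ker, map_sub, map_add, map_mul, map_pow,
    map_ofNat, aeval_X]
  simp only [Fin.isValue, Fin.val_zero, Fin.val_one, Fin.val_two, ← pow_mul, ← pow_add]
  ring_nf

theorem monomialCurveIdeal_le_of_isPrime (hn : 0 < n) (hnm : n.Coprime m)
    (P : Ideal (MvPolynomial (Fin 3) k)) [P.IsPrime] (hf : vallaF k ∈ P) (hg : vallaG k n m ∈ P) :
    monomialCurveIdeal k (fun i : Fin 3 => n + i * m) ≤ P := by
  let φ := (IsScalarTower.toAlgHom k (MvPolynomial (Fin 3) k ⧸ P)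
    (FractionRing (MvPolynomial (Fin 3) k ⧸ P))).comp (Ideal.Quotient.mkₐ k P)
  have hφ : ∀ p, aeval (fun i => φ (X i)) p = φ p := fun p => by
    rw [← comp_aeval_apply, aeval_X_left_apply]
  have hker : RingHom.ker φ = P :=
    (RingHom.ker_comp_of_injective (Ideal.Quotient.mk P) (IsFractionRing.injective _ _)).trans
      Ideal.mk_ker
  obtain ⟨t, ht⟩ := exists_eq_pow_of_aeval_vallaF_vallaG_eq_zero hn hnm (fun i => φ (X i))
    (by rw [hφ, ← RingHom.mem_ker, hker]; exact hf) (by rw [hφ, ← RingHom.mem_ker, hker]; exact hg)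
  exact hker ▸ monomialCurveIdeal_le_ker φ t ht

theorem radical_span_vallaF_vallaG (hn : 0 < n) (hnm : n.Coprime m) :
    (Ideal.span {vallaF k, vallaG k n m}).radical =
      monomialCurveIdeal k (fun i : Fin 3 => n + i * m) := by
  have hspan : Ideal.span {vallaF k, vallaG k n m} ≤
      monomialCurveIdeal k (fun i : Fin 3 => n + i * m) := by
    rw [Ideal.span_le, Set.insert_subset_iff, Set.singleton_subset_iff]
    exact ⟨vallaF_mem_monomialCurveIdeal, vallaG_mem_monomialCurveIdeal⟩
  refine le_antisymm ((RingHom.ker_isPrime _).radical_le_iff.2 hspan) ?_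
  rw [Ideal.radical_eq_sInf]
  refine le_sInf fun P ⟨hP, hPrime⟩ => ?_
  rw [Ideal.span_le, Set.insert_subset_iff, Set.singleton_subset_iff] at hP
  exact monomialCurveIdeal_le_of_isPrime hn hnm P hP.1 hP.2

end

theorem valla_stci_general (k : Type*) [Field k] (q m : ℕ) :
    ∃ f g : MvPolynomial (Fin 3) k,
      f ∈ monomialCurveIdeal k (fun i : Fin 3 => 2 * q + 1 + i.val * m) ∧
      g ∈ monomialCurveIdeal k (fun i : Fin 3 => 2 * q + 1 + i.val * m) ∧
      (Ideal.span {f, g}).radical =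
        monomialCurveIdeal k (fun i : Fin 3 => 2 * q + 1 + i.val * m) := by
  obtain ⟨c, n, m', hc, hnm, hqn, hmm'⟩ :=
    Nat.exists_coprime' (Nat.gcd_pos_of_pos_left m (by omega : 0 < 2 * q + 1))
  have hn : 0 < n := Nat.pos_of_ne_zero (by rintro rfl; omega)
  have ha : (fun i : Fin 3 => 2 * q + 1 + i.val * m) = c • fun i : Fin 3 => n + i.val * m' := by
    ext i
    simp only [Pi.smul_apply, smul_eq_mul, hqn, hmm']
    ring
  rw [ha, monomialCurveIdeal_smul _ hc]
  exact ⟨vallaF k, vallaG k n m', vallaF_mem_monomialCurveIdeal, vallaG_mem_monomialCurveIdeal,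
    radical_span_vallaF_vallaG hn hnm⟩

/-- **Valla (1980), Example 3.3.** For coprime positive integers `q, m` and
`a_i = 2q + 1 + (i - 1)m`, `i = 1, 2, 3`, the monomial curve ideal `p(a)` is a
set-theoretic complete intersection. -/
theorem valla_stci (k : Type*) [Field k] (q m : ℕ) (hq : 0 < q) (hm : 0 < m)
    (hgcd : Nat.gcd q m = 1) :
    ∃ f g : MvPolynomial (Fin 3) k,
      f ∈ monomialCurveIdeal k (fun i : Fin 3 => 2 * q + 1 + i.val * m) ∧
      g ∈ monomialCurveIdeal k (fun i : Fin 3 => 2 * q + 1 + i.val * m) ∧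
      (Ideal.span {f, g}).radical =
        monomialCurveIdeal k (fun i : Fin 3 => 2 * q + 1 + i.val * m) :=
  valla_stci_general k q m
end

section
/- Let k be a field of positive characteristic p and let a ≥ 4 be an integer. Set (a_0,a_1,a_2,a_3) = (0,1,a−1,a) and let P ⊆ k[X_0,X_1,X_2,X_3] be the kernel of the k-algebra homomorphism to k[T,U] sending X_i to T^{a−a_i}U^{a_i}, namely X_0 ↦ T^a, X_1 ↦ T^{a−1}U, X_2 ↦ TU^{a−1}, X_3 ↦ U^a. Then there exist two homogeneous polynomials f, g ∈ P such that √(f,g) = P; that is, the projective monomial curve (1, a−1, a) is a set-theoretic complete intersection in P^3. -/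
open MvPolynomial

/-- The prime ideal of the projective monomial curve with exponent sequence `e`:
the kernel of the `k`-algebra map `k[X_0, …, X_d] → k[T,U]`,
`X_i ↦ T^{e_d - e_i} U^{e_i}` (here `e_d` is the top exponent `N`). -/
noncomputable def projMonomialCurveIdeal (k : Type*) [Field k] {d : ℕ} (N : ℕ)
    (e : Fin (d + 1) → ℕ) : Ideal (MvPolynomial (Fin (d + 1)) k) :=
  RingHom.ker (MvPolynomial.aeval (R := k) fun i =>
    (X 0 : MvPolynomial (Fin 2) k) ^ (N - e i) * (X 1 : MvPolynomial (Fin 2) k) ^ (e i))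

private lemma stci_mono_eq {S : Type*} [CommRing S] (T U : S) (c q α β γ : ℕ)
    (h1 : (c + 1) * α + c * β = q) (h2 : β + (c + 1) * γ = q * c) :
    (T ^ 1 * U ^ c) ^ q =
      (T ^ (c + 1) * U ^ 0) ^ α * ((T ^ c * U ^ 1) ^ β * (T ^ 0 * U ^ (c + 1)) ^ γ) := by
  calc (T ^ 1 * U ^ c) ^ q = T ^ q * U ^ (q * c) := by ring
    _ = T ^ ((c + 1) * α + c * β) * U ^ (β + (c + 1) * γ) := by rw [h1, h2]
    _ = _ := by ring

private lemma stci_exists_param {L : Type*} [Field L] [IsAlgClosed L] (p e : ℕ)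
    (hp : p.Prime) [CharP L p] (c α β γ : ℕ) (hc : 1 ≤ c)
    (h1 : (c + 1) * α + c * β = p ^ e) (h2 : β + (c + 1) * γ = p ^ e * c)
    (h3 : 1 ≤ α + β)
    (x0 x1 x2 x3 : L) (hf : x1 ^ (c + 1) = x0 ^ c * x3)
    (hg : x2 ^ p ^ e = x0 ^ α * (x1 ^ β * x3 ^ γ)) :
    ∃ s t : L, x0 = s ^ (c + 1) ∧ x1 = s ^ c * t ∧ x2 = s * t ^ c ∧ x3 = t ^ (c + 1) := by
  haveI : Fact p.Prime := ⟨hp⟩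
  by_cases hx0 : x0 = 0
  · have hx1 : x1 = 0 := by
      have h0 : x1 ^ (c + 1) = 0 := by rw [hf, hx0, zero_pow (by omega), zero_mul]
      exact (pow_eq_zero_iff (by omega)).mp h0
    have hx2 : x2 = 0 := by
      have hz : x2 ^ p ^ e = 0 := by
        rcases Nat.eq_zero_or_pos α with hα | hα
        · rw [hg, hx1, zero_pow (by omega)]; ring
        · rw [hg, hx0, zero_pow (by omega)]; ring
      exact (pow_eq_zero_iff (pow_ne_zero e hp.pos.ne')).mp hz
    obtain ⟨t, ht⟩ := IsAlgClosed.exists_pow_nat_eq x3 (n := c + 1) (by omega)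
    refine ⟨0, t, ?_, ?_, ?_, ht.symm⟩
    · rw [hx0, zero_pow (by omega)]
    · rw [hx1, zero_pow (by omega), zero_mul]
    · rw [hx2, zero_mul]
  · obtain ⟨s, hs⟩ := IsAlgClosed.exists_pow_nat_eq x0 (n := c + 1) (by omega)
    have hs0 : s ≠ 0 := by
      intro h
      exact hx0 (by rw [← hs, h, zero_pow (by omega)])
    set t := x1 / s ^ c with ht
    have hx1 : x1 = s ^ c * t := by
      rw [ht]; field_simp
    have hx3 : x3 = t ^ (c + 1) := by
      have hcan : x0 ^ c * x3 = x0 ^ c * t ^ (c + 1) := by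
        rw [← hf, hx1, ← hs]; ring
      exact mul_left_cancel₀ (pow_ne_zero c hx0) hcan
    have hx2 : x2 = s * t ^ c := by
      have key : x2 ^ p ^ e = (s * t ^ c) ^ p ^ e := by
        rw [hg, ← hs, hx1, hx3]
        calc (s ^ (c + 1)) ^ α * ((s ^ c * t) ^ β * (t ^ (c + 1)) ^ γ)
            = s ^ ((c + 1) * α + c * β) * t ^ (β + (c + 1) * γ) := by ring
          _ = s ^ p ^ e * t ^ (p ^ e * c) := by rw [h1, h2]
          _ = (s * t ^ c) ^ p ^ e := by ring
      have hz : (x2 - s * t ^ c) ^ p ^ e = 0 := by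
        rw [sub_pow_char_pow, key, sub_self]
      exact sub_eq_zero.mp ((pow_eq_zero_iff (pow_ne_zero e hp.pos.ne')).mp hz)
    exact ⟨s, t, hs.symm, hx1, hx2, hx3⟩

private lemma stci_ker_vanish {k L : Type*} [Field k] [Field L] [IsAlgClosed L]
    (p e : ℕ) (hp : p.Prime) [CharP k p] {c q α β γ : ℕ} (hc : 1 ≤ c)
    (hq : q = p ^ e)
    (h1 : (c + 1) * α + c * β = q) (h2 : β + (c + 1) * γ = q * c) (h3 : 1 ≤ α + β)
    (χ : MvPolynomial (Fin 4) k →+* L)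
    (hfx : χ (X 1 ^ (c + 1) - X 0 ^ c * X 3) = 0)
    (hgx : χ (X 2 ^ q - X 0 ^ α * (X 1 ^ β * X 3 ^ γ)) = 0)
    (h : MvPolynomial (Fin 4) k)
    (hh : (MvPolynomial.aeval (R := k) fun i =>
        (X 0 : MvPolynomial (Fin 2) k) ^ ((c + 1) - ![0, 1, c + 1 - 1, c + 1] i) *
        (X 1 : MvPolynomial (Fin 2) k) ^ (![0, 1, c + 1 - 1, c + 1] i)) h = 0) :
    χ h = 0 := by
  subst hq
  set ρ : k →+* L := χ.comp (algebraMap k (MvPolynomial (Fin 4) k)) with hρ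
  haveI : CharP L p := charP_of_injective_ringHom ρ.injective p
  set xv : Fin 4 → L := fun i => χ (X i) with hxv
  have hfx' : (xv 1) ^ (c + 1) = (xv 0) ^ c * xv 3 := by
    rw [map_sub, map_pow, map_mul, map_pow, sub_eq_zero] at hfx
    exact hfx
  have hgx' : (xv 2) ^ p ^ e = (xv 0) ^ α * ((xv 1) ^ β * (xv 3) ^ γ) := by
    rw [map_sub, map_pow, map_mul, map_mul, map_pow, map_pow, map_pow, sub_eq_zero] at hgx
    exact hgx
  obtain ⟨s, t, hx0, hx1, hx2, hx3⟩ :=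
    stci_exists_param p e hp c α β γ hc h1 h2 h3 (xv 0) (xv 1) (xv 2) (xv 3) hfx' hgx'
  have hχeval : χ = eval₂Hom ρ xv := by
    apply MvPolynomial.ringHom_ext
    · intro r; simp [hρ, hxv]
    · intro i; simp [hxv]
  have hcomp : (eval₂Hom ρ xv : MvPolynomial (Fin 4) k →+* L) =
      (eval₂Hom ρ ![s, t]).comp
        ((MvPolynomial.aeval (R := k) fun i =>
          (X 0 : MvPolynomial (Fin 2) k) ^ ((c + 1) - ![0, 1, c + 1 - 1, c + 1] i) *
          (X 1 : MvPolynomial (Fin 2) k) ^ (![0, 1, c + 1 - 1, c + 1] i)) :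
            MvPolynomial (Fin 4) k →ₐ[k] MvPolynomial (Fin 2) k).toRingHom := by
    apply MvPolynomial.ringHom_ext
    · intro r
      simp [aeval_C, hρ]
    · intro i
      fin_cases i <;>
        simp only [RingHom.comp_apply, AlgHom.toRingHom_eq_coe, RingHom.coe_coe, aeval_X,
          eval₂Hom_X', map_mul, map_pow, Matrix.cons_val_zero, Matrix.cons_val_one,
          Matrix.head_cons, Matrix.cons_val_succ, Matrix.cons_val_two, Matrix.cons_val_three,
          Matrix.vecTail, Matrix.vecHead, Nat.add_sub_cancel, Nat.sub_self, Nat.sub_zero,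
          Function.comp, Nat.add_sub_cancel_left] <;>
        simp [hx0, hx1, hx2, hx3]
  have hh' : ((MvPolynomial.aeval (R := k) fun i =>
      (X 0 : MvPolynomial (Fin 2) k) ^ ((c + 1) - ![0, 1, c + 1 - 1, c + 1] i) *
      (X 1 : MvPolynomial (Fin 2) k) ^ (![0, 1, c + 1 - 1, c + 1] i)) :
        MvPolynomial (Fin 4) k →ₐ[k] MvPolynomial (Fin 2) k).toRingHom h = 0 := hh
  rw [hχeval, hcomp, RingHom.comp_apply, hh', map_zero]

set_option maxHeartbeats 1000000 in
set_option synthInstance.maxHeartbeats 400000 in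
/-- **Hartshorne.** Over a field of positive characteristic, the projective monomial
curve `(1, a-1, a)` in `ℙ³` (i.e. `X₀ ↦ T^a`, `X₁ ↦ T^{a-1}U`, `X₂ ↦ TU^{a-1}`,
`X₃ ↦ U^a`) is a set-theoretic complete intersection. -/
theorem hartshorne_char_p_stci (k : Type*) [Field k] (p : ℕ) (hp : 0 < p) [CharP k p]
    (a : ℕ) (ha : 4 ≤ a) :
    ∃ f g : MvPolynomial (Fin 4) k, ∃ m n : ℕ,
      f.IsHomogeneous m ∧ g.IsHomogeneous n ∧
      f ∈ projMonomialCurveIdeal k a ![0, 1, a - 1, a] ∧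
      g ∈ projMonomialCurveIdeal k a ![0, 1, a - 1, a] ∧
      (Ideal.span {f, g}).radical = projMonomialCurveIdeal k a ![0, 1, a - 1, a] := by
  obtain ⟨c, rfl⟩ : ∃ c, a = c + 1 := ⟨a - 1, by omega⟩
  have hc : 3 ≤ c := by omega
  have hp' : p.Prime := CharP.char_prime_of_ne_zero k hp.ne'
  -- the Frobenius power
  set q : ℕ := p ^ (c * c) with hqdef
  have hq2 : c * c < q := by
    calc c * c < 2 ^ (c * c) := Nat.lt_two_pow_self
      _ ≤ p ^ (c * c) := Nat.pow_le_pow_left hp'.two_le _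
  have hq0 : 0 < q := by positivity
  -- the exponents of the second binomial
  set γ : ℕ := q * c / (c + 1) with hγdef
  set β : ℕ := q * c % (c + 1) with hβdef
  have h2 : β + (c + 1) * γ = q * c := Nat.mod_add_div _ _
  have hβc : β ≤ c := by
    have := Nat.mod_lt (q * c) (y := c + 1) (by omega)
    omega
  have h2Z : (β : ℤ) + (c + 1) * γ = q * c := by exact_mod_cast h2
  have hβZ : (β : ℤ) ≤ c := by exact_mod_cast hβc
  have hq2Z : (c : ℤ) * c < q := by exact_mod_cast hq2
  have hgeZ : (q : ℤ) * c ≤ c * γ + q := by nlinarith [h2Z, hβZ, hq2Z, sq_nonneg ((c : ℤ))]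
  have hge : q * c ≤ c * γ + q := by exact_mod_cast hgeZ
  set α : ℕ := c * γ + q - q * c with hαdef
  have hα' : (α : ℤ) = (c * γ + q : ℕ) - (q * c : ℕ) := Nat.cast_sub hge
  push_cast at hα'
  have h1 : (c + 1) * α + c * β = q := by
    have hZ : ((c : ℤ) + 1) * α + c * β = q := by
      rw [hα']; linear_combination (c : ℤ) * h2Z
    exact_mod_cast hZ
  have h3 : 1 ≤ α + β := by
    by_contra hcon
    push_neg at hcon
    have hA : α = 0 := by omega
    have hB : β = 0 := by omega
    rw [hA, hB] at h1
    omega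
  have hsum : α + β + γ = q := by
    have : (c + 1) * (α + β + γ) = (c + 1) * q := by
      calc (c + 1) * (α + β + γ)
          = ((c + 1) * α + c * β) + (β + (c + 1) * γ) := by ring
        _ = q + q * c := by rw [h1, h2]
        _ = (c + 1) * q := by ring
    exact Nat.eq_of_mul_eq_mul_left (by omega) this
  -- membership of the two binomials in the prime
  have hfP : (X 1 ^ (c + 1) - X 0 ^ c * X 3 : MvPolynomial (Fin 4) k) ∈
      projMonomialCurveIdeal k (c + 1) ![0, 1, c + 1 - 1, c + 1] := by
    rw [projMonomialCurveIdeal, RingHom.mem_ker]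
    simp only [map_sub, map_pow, map_mul, aeval_X, Matrix.cons_val_zero, Matrix.cons_val_one,
      Matrix.head_cons, Matrix.cons_val_succ, Matrix.cons_val_two, Matrix.cons_val_three,
      Matrix.vecTail, Matrix.vecHead, Nat.add_sub_cancel, Nat.sub_self, Nat.sub_zero,
      Function.comp]
    ring
  have hgP : (X 2 ^ q - X 0 ^ α * (X 1 ^ β * X 3 ^ γ) : MvPolynomial (Fin 4) k) ∈
      projMonomialCurveIdeal k (c + 1) ![0, 1, c + 1 - 1, c + 1] := by
    rw [projMonomialCurveIdeal, RingHom.mem_ker]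
    simp only [map_sub, map_pow, map_mul, aeval_X, Matrix.cons_val_zero, Matrix.cons_val_one,
      Matrix.head_cons, Matrix.cons_val_succ, Matrix.cons_val_two, Matrix.cons_val_three,
      Matrix.vecTail, Matrix.vecHead, Nat.add_sub_cancel, Nat.sub_self, Nat.sub_zero,
      Function.comp]
    rw [show c + 1 - c = 1 by omega, sub_eq_zero]
    exact stci_mono_eq _ _ c q α β γ h1 h2
  refine ⟨X 1 ^ (c + 1) - X 0 ^ c * X 3, X 2 ^ q - X 0 ^ α * (X 1 ^ β * X 3 ^ γ),
    c + 1, q, ?_, ?_, hfP, hgP, ?_⟩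
  · exact (isHomogeneous_X_pow _ _).sub
      (((isHomogeneous_X_pow _ _).mul (isHomogeneous_X _ _)) : IsHomogeneous _ (c + 1))
  · refine (isHomogeneous_X_pow _ _).sub ?_
    have : ((X 0 ^ α * (X 1 ^ β * X 3 ^ γ)) : MvPolynomial (Fin 4) k).IsHomogeneous
        (α + (β + γ)) :=
      ((isHomogeneous_X_pow (R := k) (0 : Fin 4) α).mul
        ((isHomogeneous_X_pow (R := k) (1 : Fin 4) β).mul
          (isHomogeneous_X_pow (R := k) (3 : Fin 4) γ)))
    rwa [show α + (β + γ) = q by omega] at this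
  · -- the radical equality
    apply le_antisymm
    · -- radical ≤ P
      have hprime : (projMonomialCurveIdeal k (c + 1) ![0, 1, c + 1 - 1, c + 1]).IsPrime :=
        RingHom.ker_isPrime _
      have hle : Ideal.span {X 1 ^ (c + 1) - X 0 ^ c * X 3,
          X 2 ^ q - X 0 ^ α * (X 1 ^ β * X 3 ^ γ)} ≤
          projMonomialCurveIdeal k (c + 1) ![0, 1, c + 1 - 1, c + 1] := by
        rw [Ideal.span_le]
        rintro x (rfl | rfl)
        · exact hfP
        · exact hgP
      calc (Ideal.span _).radical ≤
          (projMonomialCurveIdeal k (c + 1) ![0, 1, c + 1 - 1, c + 1]).radical :=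
            Ideal.radical_mono hle
        _ = _ := hprime.radical
    · -- P ≤ radical
      intro h hh
      rw [Ideal.radical_eq_sInf, Submodule.mem_sInf]
      rintro Q ⟨hQle, hQprime⟩
      haveI : Ideal.IsPrime Q := hQprime
      have hfQ : (X 1 ^ (c + 1) - X 0 ^ c * X 3 : MvPolynomial (Fin 4) k) ∈ Q :=
        hQle (Ideal.subset_span (by simp))
      have hgQ : (X 2 ^ q - X 0 ^ α * (X 1 ^ β * X 3 ^ γ) : MvPolynomial (Fin 4) k) ∈ Q :=
        hQle (Ideal.subset_span (by simp))
      have key := stci_ker_vanish (k := k)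
        (L := AlgebraicClosure (FractionRing (MvPolynomial (Fin 4) k ⧸ Q)))
        p (c * c) hp' (by omega : 1 ≤ c) hqdef h1 h2 h3
        (((algebraMap (FractionRing (MvPolynomial (Fin 4) k ⧸ Q))
            (AlgebraicClosure (FractionRing (MvPolynomial (Fin 4) k ⧸ Q)))).comp
          (algebraMap (MvPolynomial (Fin 4) k ⧸ Q)
            (FractionRing (MvPolynomial (Fin 4) k ⧸ Q)))).comp (Ideal.Quotient.mk Q))
        (by simp [RingHom.comp_apply, (Ideal.Quotient.eq_zero_iff_mem).mpr hfQ])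
        (by simp [RingHom.comp_apply, (Ideal.Quotient.eq_zero_iff_mem).mpr hgQ])
        h (by rw [projMonomialCurveIdeal, RingHom.mem_ker] at hh; exact hh)
      have hz : Ideal.Quotient.mk Q h = 0 := by
        apply IsFractionRing.injective (MvPolynomial (Fin 4) k ⧸ Q)
          (FractionRing (MvPolynomial (Fin 4) k ⧸ Q))
        apply RingHom.injective (algebraMap (FractionRing (MvPolynomial (Fin 4) k ⧸ Q))
          (AlgebraicClosure (FractionRing (MvPolynomial (Fin 4) k ⧸ Q))))
        simpa [RingHom.comp_apply] using key
      exact (Ideal.Quotient.eq_zero_iff_mem).mp hz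
end
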